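/- arXiv:0910.4212 — 2 statements merged into one kernel-verified Lean document; each statement's English description precedes it below -/
import Mathlib

section
/- The number of type B_n partitions without zero-block having exactly 2j blocks equals 2^{n−j} S(n,j), where S(n,j) is the Stirling number of the second kind. -/
/-- The ground set `{±1, …, ±n}` of type `B_n` partitions, as a finset of integers. -/
noncomputable def BGround (n : ℕ) : Finset ℤ := (Finset.Icc (-(n : ℤ)) n).erase 0

/-- `P` is a set partition of the finset `S`: blocks are nonempty subsets of `S`
and every element of `S` lies in a unique block. -/
def IsPartitionOf (P : Finset (Finset ℤ)) (S : Finset ℤ) : Prop :=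
  (∀ B ∈ P, B.Nonempty) ∧ (∀ B ∈ P, B ⊆ S) ∧ (∀ x ∈ S, ∃! B, B ∈ P ∧ x ∈ B)

/-- The negation `-B` of a block `B`. -/
def negBlock (B : Finset ℤ) : Finset ℤ := B.image (fun x => -x)

/-- `P` is a type `B_n` set partition without zero-block: a set partition of
`{±1, …, ±n}` such that the negation of every block is a block and no block is
self-negating. -/
def IsBPartNZ (n : ℕ) (P : Finset (Finset ℤ)) : Prop :=
  IsPartitionOf P (BGround n) ∧ (∀ B ∈ P, negBlock B ∈ P) ∧ ∀ B ∈ P, negBlock B ≠ B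

/-- The number of singleton pairs `±i` of `P`, i.e. of `i ∈ [n]` with `{i}` a block. -/
noncomputable def spairs (n : ℕ) (P : Finset (Finset ℤ)) : ℕ :=
  ((Finset.Icc (1 : ℤ) n).filter (fun i => {i} ∈ P)).card

/-- The cyclic successor of `j` in `{1, …, n}` (so `n` is followed by `1`). -/
def bnext (n : ℕ) (j : ℤ) : ℤ := if j = n then 1 else j + 1

/-- The number of adjacency pairs `±(j, j+1)` of `P`, i.e. of `j ∈ [n]` with `j` and
`j+1` (mod `n`) in a common block. -/
noncomputable def apairs (n : ℕ) (P : Finset (Finset ℤ)) : ℕ :=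
  ((Finset.Icc (1 : ℤ) n).filter (fun j => ∃ B ∈ P, j ∈ B ∧ bnext n j ∈ B)).card

/-- Stirling numbers of the second kind. -/
def stirling2 : ℕ → ℕ → ℕ
  | 0, 0 => 1
  | 0, _ + 1 => 0
  | _ + 1, 0 => 0
  | n + 1, k + 1 => (k + 1) * stirling2 n (k + 1) + stirling2 n k

open Finset
open scoped Classical

lemma mem_BGround {n : ℕ} {x : ℤ} : x ∈ BGround n ↔ x ≠ 0 ∧ -(n:ℤ) ≤ x ∧ x ≤ n := by
  simp [BGround, Finset.mem_erase, Finset.mem_Icc, and_assoc]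

lemma card_BGround (n : ℕ) : (BGround n).card = 2*n := by
  rw [BGround, card_erase_of_mem (by simp [Finset.mem_Icc])]
  rw [Int.card_Icc]
  omega

@[simp] lemma mem_negBlock {B : Finset ℤ} {x : ℤ} : x ∈ negBlock B ↔ -x ∈ B := by
  simp only [negBlock, Finset.mem_image]
  constructor
  · rintro ⟨y, hy, rfl⟩; simpa
  · intro h; exact ⟨-x, h, by ring⟩

lemma negBlock_negBlock (B : Finset ℤ) : negBlock (negBlock B) = B := by
  ext x; simp

lemma negBlock_inj {B C : Finset ℤ} (h : negBlock B = negBlock C) : B = C := by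
  rw [← negBlock_negBlock B, h, negBlock_negBlock]

lemma negBlock_insert (a : ℤ) (B : Finset ℤ) :
    negBlock (insert a B) = insert (-a) (negBlock B) := by
  ext x
  simp only [mem_negBlock, Finset.mem_insert]
  constructor
  · rintro (h | h); · left; omega
    · right; simpa
  · rintro (h | h); · left; omega
    · right; simpa

lemma negBlock_erase (a : ℤ) (B : Finset ℤ) :
    negBlock (B.erase a) = (negBlock B).erase (-a) := by
  ext x
  simp only [mem_negBlock, Finset.mem_erase]
  constructor
  · rintro ⟨h1, h2⟩; exact ⟨by omega, h2⟩
  · rintro ⟨h1, h2⟩; exact ⟨by omega, h2⟩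

@[simp] lemma negBlock_singleton (a : ℤ) : negBlock ({a} : Finset ℤ) = {-a} := by
  ext x; simp; omega

lemma negBlock_nonempty {B : Finset ℤ} (h : B.Nonempty) : (negBlock B).Nonempty := by
  obtain ⟨x, hx⟩ := h
  exact ⟨-x, by simpa⟩

lemma blocks_disj {n : ℕ} {P : Finset (Finset ℤ)} (hP : IsBPartNZ n P) {B C : Finset ℤ}
    (hB : B ∈ P) (hC : C ∈ P) {x : ℤ} (hxB : x ∈ B) (hxC : x ∈ C) : B = C := by
  have hx : x ∈ BGround n := hP.1.2.1 B hB hxB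
  obtain ⟨D, -, hD⟩ := hP.1.2.2 x hx
  rw [hD B ⟨hB, hxB⟩, hD C ⟨hC, hxC⟩]

lemma neg_not_mem {n : ℕ} {P : Finset (Finset ℤ)} (hP : IsBPartNZ n P) {B : Finset ℤ}
    (hB : B ∈ P) {x : ℤ} (hx : x ∈ B) : -x ∉ B := by
  intro h
  exact hP.2.2 B hB (blocks_disj hP (hP.2.1 B hB) hB (by simpa using hx) h)

noncomputable def BP (n m : ℕ) : Finset (Finset (Finset ℤ)) :=
  ((BGround n).powerset.powerset).filter (fun P => IsBPartNZ n P ∧ P.card = m)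

lemma mem_BP {n m : ℕ} {P : Finset (Finset ℤ)} :
    P ∈ BP n m ↔ IsBPartNZ n P ∧ P.card = m := by
  simp only [BP, mem_filter, mem_powerset]
  constructor
  · exact fun h => h.2
  · intro h
    refine ⟨fun B hB => ?_, h⟩
    rw [mem_powerset]
    exact h.1.1.2.1 B hB

noncomputable def theBlock (P : Finset (Finset ℤ)) (x : ℤ) : Finset ℤ :=
  (P.filter (fun B => x ∈ B)).biUnion id

lemma theBlock_eq {n : ℕ} {P : Finset (Finset ℤ)} (hP : IsBPartNZ n P) {x : ℤ}
    {B : Finset ℤ} (hB : B ∈ P) (hxB : x ∈ B) : theBlock P x = B := by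
  have hfil : P.filter (fun C => x ∈ C) = {B} := by
    ext C
    simp only [mem_filter, mem_singleton]
    constructor
    · rintro ⟨hC, hxC⟩; exact blocks_disj hP hC hB hxC hxB
    · rintro rfl; exact ⟨hB, hxB⟩
  simp [theBlock, hfil]

lemma BGround_mono {n : ℕ} : BGround n ⊆ BGround (n+1) := by
  intro x hx
  rw [mem_BGround] at hx ⊢
  push_cast
  omega

lemma N_mem_BGround {n : ℕ} : ((n:ℤ)+1) ∈ BGround (n+1) := by
  rw [mem_BGround]; push_cast; omega

lemma negN_mem_BGround {n : ℕ} : -((n:ℤ)+1) ∈ BGround (n+1) := by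
  rw [mem_BGround]; push_cast; omega

lemma N_not_mem_BGround {n : ℕ} : ((n:ℤ)+1) ∉ BGround n := by
  rw [mem_BGround]; push_cast; omega

lemma negN_not_mem_BGround {n : ℕ} : -((n:ℤ)+1) ∉ BGround n := by
  rw [mem_BGround]; push_cast; omega

lemma mem_BGround_of_ne {n : ℕ} {x : ℤ} (hx : x ∈ BGround (n+1))
    (h1 : x ≠ (n:ℤ)+1) (h2 : x ≠ -((n:ℤ)+1)) : x ∈ BGround n := by
  rw [mem_BGround] at hx ⊢
  push_cast at hx ⊢
  omega

lemma BGround_mem_ne {n : ℕ} {x : ℤ} (hx : x ∈ BGround n) :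
    x ≠ (n:ℤ)+1 ∧ x ≠ -((n:ℤ)+1) := by
  rw [mem_BGround] at hx; omega

lemma card_filter_singleton (n j : ℕ) :
    ((BP (n+1) (2*j+2)).filter (fun P => ({((n:ℤ)+1)} : Finset ℤ) ∈ P)).card
      = (BP n (2*j)).card := by
  set N : ℤ := (n:ℤ)+1 with hNdef
  have hNne : ({N} : Finset ℤ) ≠ {-N} := by
    intro h
    have : N ∈ ({-N} : Finset ℤ) := h ▸ Finset.mem_singleton_self N
    rw [Finset.mem_singleton] at this
    omega
  apply card_bij' (fun P _ => (P.erase {N}).erase {-N})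
    (fun Q _ => insert {N} (insert {-N} Q))
  · -- left inverse
    intro P hP
    rw [mem_filter, mem_BP] at hP
    obtain ⟨⟨hB, hcard⟩, hsing⟩ := hP
    have hnegsing : ({-N} : Finset ℤ) ∈ P := by
      have := hB.2.1 _ hsing
      simpa using this
    rw [Finset.insert_erase (by simp [Finset.mem_erase, hNne.symm, hnegsing]),
      Finset.insert_erase hsing]
  · -- right inverse
    intro Q hQ
    rw [mem_BP] at hQ
    have hsQ : ({N} : Finset ℤ) ∉ Q := by
      intro h
      exact N_not_mem_BGround (hQ.1.1.2.1 _ h (Finset.mem_singleton_self N))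
    have hsQ' : ({-N} : Finset ℤ) ∉ Q := by
      intro h
      exact negN_not_mem_BGround (hQ.1.1.2.1 _ h (Finset.mem_singleton_self (-N)))
    rw [Finset.erase_insert (by simp [hNne, hsQ]), Finset.erase_insert hsQ']
  · -- forward lands in BP n (2*j)
    intro P hP
    rw [mem_filter, mem_BP] at hP
    obtain ⟨⟨hB, hcard⟩, hsing⟩ := hP
    have hnegsing : ({-N} : Finset ℤ) ∈ P := by
      have := hB.2.1 _ hsing
      simpa using this
    have hmem : ∀ B ∈ (P.erase {N}).erase {-N}, B ∈ P ∧ B ≠ {N} ∧ B ≠ {-N} := by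
      intro B hB'
      simp only [Finset.mem_erase] at hB'
      exact ⟨hB'.2.2, hB'.2.1, hB'.1⟩
    rw [mem_BP]
    refine ⟨⟨⟨?_, ?_, ?_⟩, ?_, ?_⟩, ?_⟩
    · intro B hB'; exact hB.1.1 B (hmem B hB').1
    · intro B hB' x hx
      obtain ⟨hBP, hne1, hne2⟩ := hmem B hB'
      have hx1 : x ∈ BGround (n+1) := hB.1.2.1 B hBP hx
      refine mem_BGround_of_ne hx1 ?_ ?_
      · rintro rfl
        exact hne1 (blocks_disj hB hBP hsing hx (Finset.mem_singleton_self N))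
      · rintro rfl
        exact hne2 (blocks_disj hB hBP hnegsing hx (Finset.mem_singleton_self (-N)))
    · intro x hx
      obtain ⟨B, ⟨hBP, hxB⟩, huniq⟩ := hB.1.2.2 x (BGround_mono hx)
      have hxne := BGround_mem_ne hx
      have hB1 : B ≠ {N} := by
        rintro rfl; rw [Finset.mem_singleton] at hxB; exact hxne.1 hxB
      have hB2 : B ≠ {-N} := by
        rintro rfl; rw [Finset.mem_singleton] at hxB; exact hxne.2 hxB
      refine ⟨B, ⟨by simp [Finset.mem_erase, hB1, hB2, hBP], hxB⟩, ?_⟩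
      rintro C ⟨hC, hxC⟩
      exact huniq C ⟨(hmem C hC).1, hxC⟩
    · intro B hB'
      obtain ⟨hBP, hne1, hne2⟩ := hmem B hB'
      have h1 : negBlock B ∈ P := hB.2.1 B hBP
      have h2 : negBlock B ≠ {N} := by
        intro h
        apply hne2 (negBlock_inj ?_)
        rw [h]; simp
      have h3 : negBlock B ≠ {-N} := by
        intro h
        apply hne1 (negBlock_inj ?_)
        rw [h]; simp
      simp [Finset.mem_erase, h1, h2, h3]
    · intro B hB'
      exact hB.2.2 B (hmem B hB').1
    · rw [card_erase_of_mem (by simp [Finset.mem_erase, hNne.symm, hnegsing]),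
        card_erase_of_mem hsing, hcard]
      omega
  · -- backward lands in the filter
    intro Q hQ
    rw [mem_BP] at hQ
    obtain ⟨hB, hcard⟩ := hQ
    have hNnotin : ∀ B ∈ Q, (N : ℤ) ∉ B ∧ -N ∉ B := by
      intro B hBQ
      constructor
      · intro h; exact N_not_mem_BGround (hB.1.2.1 B hBQ h)
      · intro h; exact negN_not_mem_BGround (hB.1.2.1 B hBQ h)
    have hsQ : ({N} : Finset ℤ) ∉ Q := fun h => (hNnotin _ h).1 (Finset.mem_singleton_self N)
    have hsQ' : ({-N} : Finset ℤ) ∉ Q := fun h => (hNnotin _ h).2 (Finset.mem_singleton_self (-N))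
    have hmemP : ∀ B, B ∈ insert {N} (insert {-N} Q) ↔ B = {N} ∨ B = {-N} ∨ B ∈ Q := by
      intro B; simp [Finset.mem_insert]
    rw [mem_filter, mem_BP]
    refine ⟨⟨⟨⟨?_, ?_, ?_⟩, ?_, ?_⟩, ?_⟩, by simp⟩
    · intro B hB'
      rcases (hmemP B).1 hB' with rfl | rfl | h
      · exact ⟨N, Finset.mem_singleton_self N⟩
      · exact ⟨-N, Finset.mem_singleton_self (-N)⟩
      · exact hB.1.1 B h
    · intro B hB' x hx
      rcases (hmemP B).1 hB' with rfl | rfl | h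
      · rw [Finset.mem_singleton] at hx; subst hx; exact N_mem_BGround
      · rw [Finset.mem_singleton] at hx; subst hx; exact negN_mem_BGround
      · exact BGround_mono (hB.1.2.1 B h hx)
    · intro x hx
      by_cases hx1 : x = N
      · subst hx1
        refine ⟨{N}, ⟨(hmemP _).2 (Or.inl rfl), Finset.mem_singleton_self N⟩, ?_⟩
        rintro C ⟨hC, hxC⟩
        rcases (hmemP C).1 hC with rfl | rfl | h
        · rfl
        · rw [Finset.mem_singleton] at hxC; omega
        · exact absurd hxC (hNnotin C h).1
      by_cases hx2 : x = -N
      · subst hx2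
        refine ⟨{-N}, ⟨(hmemP _).2 (Or.inr (Or.inl rfl)), Finset.mem_singleton_self (-N)⟩, ?_⟩
        rintro C ⟨hC, hxC⟩
        rcases (hmemP C).1 hC with rfl | rfl | h
        · rw [Finset.mem_singleton] at hxC; omega
        · rfl
        · exact absurd hxC (hNnotin C h).2
      · have hx' : x ∈ BGround n := mem_BGround_of_ne hx hx1 hx2
        obtain ⟨B, ⟨hBQ, hxB⟩, huniq⟩ := hB.1.2.2 x hx'
        refine ⟨B, ⟨(hmemP B).2 (Or.inr (Or.inr hBQ)), hxB⟩, ?_⟩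
        rintro C ⟨hC, hxC⟩
        rcases (hmemP C).1 hC with rfl | rfl | h
        · rw [Finset.mem_singleton] at hxC; exact absurd hxC hx1
        · rw [Finset.mem_singleton] at hxC; exact absurd hxC hx2
        · exact huniq C ⟨h, hxC⟩
    · intro B hB'
      rcases (hmemP B).1 hB' with rfl | rfl | h
      · rw [negBlock_singleton]; exact (hmemP _).2 (Or.inr (Or.inl rfl))
      · rw [negBlock_singleton, neg_neg]; exact (hmemP _).2 (Or.inl rfl)
      · exact (hmemP _).2 (Or.inr (Or.inr (hB.2.1 B h)))
    · intro B hB'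
      rcases (hmemP B).1 hB' with rfl | rfl | h
      · rw [negBlock_singleton]; exact hNne.symm
      · rw [negBlock_singleton, neg_neg]; exact hNne
      · exact hB.2.2 B h
    · rw [card_insert_of_notMem (by simp [hNne, hsQ]),
        card_insert_of_notMem hsQ', hcard]

/-- Remove `±(n+1)` from a block. -/
def stripB (n : ℕ) (B : Finset ℤ) : Finset ℤ := (B.erase ((n:ℤ)+1)).erase (-((n:ℤ)+1))

lemma mem_stripB {n : ℕ} {B : Finset ℤ} {x : ℤ} :
    x ∈ stripB n B ↔ x ∈ B ∧ x ≠ (n:ℤ)+1 ∧ x ≠ -((n:ℤ)+1) := by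
  simp only [stripB, Finset.mem_erase]
  tauto

lemma stripB_subset {n : ℕ} {B : Finset ℤ} : stripB n B ⊆ B := by
  intro x hx; exact (mem_stripB.1 hx).1

lemma negBlock_stripB (n : ℕ) (B : Finset ℤ) :
    negBlock (stripB n B) = stripB n (negBlock B) := by
  ext x
  simp only [mem_negBlock, mem_stripB]
  constructor
  · rintro ⟨h1, h2, h3⟩; exact ⟨h1, by omega, by omega⟩
  · rintro ⟨h1, h2, h3⟩; exact ⟨h1, by omega, by omega⟩

lemma stripB_eq_self {n : ℕ} {B : Finset ℤ} (h1 : ((n:ℤ)+1) ∉ B) (h2 : -((n:ℤ)+1) ∉ B) :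
    stripB n B = B := by
  rw [stripB, Finset.erase_eq_of_notMem h1, Finset.erase_eq_of_notMem h2]

section Down

variable {n : ℕ} {P : Finset (Finset ℤ)}

lemma stripB_nonempty (hP : IsBPartNZ (n+1) P) (h1 : ({(n:ℤ)+1} : Finset ℤ) ∉ P)
    {B : Finset ℤ} (hB : B ∈ P) : (stripB n B).Nonempty := by
  set N : ℤ := (n:ℤ)+1
  by_contra hemp
  rw [Finset.not_nonempty_iff_eq_empty] at hemp
  have hsub : ∀ x ∈ B, x = N ∨ x = -N := by
    intro x hx
    by_contra hc
    push_neg at hc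
    have : x ∈ stripB n B := mem_stripB.2 ⟨hx, hc.1, hc.2⟩
    simp [hemp] at this
  have h2 : ({-N} : Finset ℤ) ∉ P := by
    intro h
    have := hP.2.1 _ h
    rw [negBlock_singleton, neg_neg] at this
    exact h1 this
  obtain ⟨y, hy⟩ := hP.1.1 B hB
  rcases hsub y hy with rfl | rfl
  · -- B = {N}
    apply h1
    have : B = {N} := by
      apply Finset.eq_singleton_iff_unique_mem.2 ⟨hy, ?_⟩
      intro x hx
      rcases hsub x hx with rfl | rfl
      · rfl
      · exact absurd hx (neg_not_mem hP hB hy)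
    rwa [← this]
  · -- B = {-N}
    apply h2
    have : B = {-N} := by
      apply Finset.eq_singleton_iff_unique_mem.2 ⟨hy, ?_⟩
      intro x hx
      rcases hsub x hx with rfl | rfl
      · exact absurd hy (by simpa using neg_not_mem hP hB hx)
      · rfl
    rwa [← this]

lemma stripB_injOn (hP : IsBPartNZ (n+1) P) (h1 : ({(n:ℤ)+1} : Finset ℤ) ∉ P)
    {B C : Finset ℤ} (hB : B ∈ P) (hC : C ∈ P) (h : stripB n B = stripB n C) : B = C := by
  obtain ⟨x, hx⟩ := stripB_nonempty hP h1 hB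
  have hx' : x ∈ stripB n C := h ▸ hx
  exact blocks_disj hP hB hC (stripB_subset hx) (stripB_subset hx')

lemma down_isBPart (hP : IsBPartNZ (n+1) P) (h1 : ({(n:ℤ)+1} : Finset ℤ) ∉ P) :
    IsBPartNZ n (P.image (stripB n)) := by
  set N : ℤ := (n:ℤ)+1 with hNdef
  refine ⟨⟨?_, ?_, ?_⟩, ?_, ?_⟩
  · intro B hB
    rw [Finset.mem_image] at hB
    obtain ⟨B', hB', rfl⟩ := hB
    exact stripB_nonempty hP h1 hB'
  · intro B hB x hx
    rw [Finset.mem_image] at hB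
    obtain ⟨B', hB', rfl⟩ := hB
    rw [mem_stripB] at hx
    exact mem_BGround_of_ne (hP.1.2.1 B' hB' hx.1) hx.2.1 hx.2.2
  · intro x hx
    obtain ⟨B, ⟨hBP, hxB⟩, huniq⟩ := hP.1.2.2 x (BGround_mono hx)
    have hxne := BGround_mem_ne hx
    refine ⟨stripB n B, ⟨Finset.mem_image_of_mem _ hBP, mem_stripB.2 ⟨hxB, hxne.1, hxne.2⟩⟩, ?_⟩
    rintro C ⟨hC, hxC⟩
    rw [Finset.mem_image] at hC
    obtain ⟨C', hC', rfl⟩ := hC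
    rw [huniq C' ⟨hC', stripB_subset hxC⟩]
  · intro B hB
    rw [Finset.mem_image] at hB
    obtain ⟨B', hB', rfl⟩ := hB
    rw [negBlock_stripB]
    exact Finset.mem_image_of_mem _ (hP.2.1 B' hB')
  · intro B hB
    rw [Finset.mem_image] at hB
    obtain ⟨B', hB', rfl⟩ := hB
    rw [negBlock_stripB]
    intro h
    exact hP.2.2 B' hB'
      (stripB_injOn hP h1 (hP.2.1 B' hB') hB' h)

lemma down_card (hP : IsBPartNZ (n+1) P) (h1 : ({(n:ℤ)+1} : Finset ℤ) ∉ P) :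
    (P.image (stripB n)).card = P.card :=
  Finset.card_image_of_injOn (fun B hB C hC h => stripB_injOn hP h1 hB hC h)

end Down

/-- Insert `n+1` into block `C` (and `-(n+1)` into `-C`). -/
def glue (n : ℕ) (Q : Finset (Finset ℤ)) (C : Finset ℤ) : Finset (Finset ℤ) :=
  insert (insert ((n:ℤ)+1) C)
    (insert (insert (-((n:ℤ)+1)) (negBlock C)) ((Q.erase C).erase (negBlock C)))

section Up

variable {n : ℕ} {Q : Finset (Finset ℤ)} {C : Finset ℤ}

lemma glue_mem_iff {B : Finset ℤ} :
    B ∈ glue n Q C ↔ B = insert ((n:ℤ)+1) C ∨ B = insert (-((n:ℤ)+1)) (negBlock C)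
      ∨ (B ∈ Q ∧ B ≠ C ∧ B ≠ negBlock C) := by
  simp only [glue, Finset.mem_insert, Finset.mem_erase]
  tauto

lemma no_N_mem (hQ : IsBPartNZ n Q) {B : Finset ℤ} (hB : B ∈ Q) :
    ((n:ℤ)+1) ∉ B ∧ -((n:ℤ)+1) ∉ B := by
  constructor
  · intro h; exact N_not_mem_BGround (hQ.1.2.1 B hB h)
  · intro h; exact negN_not_mem_BGround (hQ.1.2.1 B hB h)

lemma glue_isBPart (hQ : IsBPartNZ n Q) (hC : C ∈ Q) :
    IsBPartNZ (n+1) (glue n Q C) := by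
  set N : ℤ := (n:ℤ)+1 with hNdef
  have hD : negBlock C ∈ Q := hQ.2.1 C hC
  have hDC : negBlock C ≠ C := hQ.2.2 C hC
  have hNC : N ∉ C := (no_N_mem hQ hC).1
  have hnND : -N ∉ negBlock C := (no_N_mem hQ hD).2
  have hE1E2 : insert N C ≠ insert (-N) (negBlock C) := by
    intro h
    have : N ∈ insert (-N) (negBlock C) := h ▸ Finset.mem_insert_self N C
    rcases Finset.mem_insert.1 this with h' | h'
    · omega
    · exact (no_N_mem hQ hD).1 h'
  refine ⟨⟨?_, ?_, ?_⟩, ?_, ?_⟩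
  · intro B hB
    rcases glue_mem_iff.1 hB with rfl | rfl | ⟨h, -, -⟩
    · exact Finset.insert_nonempty _ _
    · exact Finset.insert_nonempty _ _
    · exact hQ.1.1 B h
  · intro B hB x hx
    rcases glue_mem_iff.1 hB with rfl | rfl | ⟨h, -, -⟩
    · rcases Finset.mem_insert.1 hx with rfl | h'
      · exact N_mem_BGround
      · exact BGround_mono (hQ.1.2.1 C hC h')
    · rcases Finset.mem_insert.1 hx with rfl | h'
      · exact negN_mem_BGround
      · exact BGround_mono (hQ.1.2.1 _ hD h')
    · exact BGround_mono (hQ.1.2.1 B h hx)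
  · intro x hx
    by_cases hx1 : x = N
    · subst hx1
      refine ⟨insert N C, ⟨glue_mem_iff.2 (Or.inl rfl), Finset.mem_insert_self _ _⟩, ?_⟩
      rintro B ⟨hB, hxB⟩
      rcases glue_mem_iff.1 hB with rfl | rfl | ⟨h, -, -⟩
      · rfl
      · rcases Finset.mem_insert.1 hxB with h' | h'
        · omega
        · exact absurd h' (no_N_mem hQ hD).1
      · exact absurd hxB (no_N_mem hQ h).1
    by_cases hx2 : x = -N
    · subst hx2
      refine ⟨insert (-N) (negBlock C),
        ⟨glue_mem_iff.2 (Or.inr (Or.inl rfl)), Finset.mem_insert_self _ _⟩, ?_⟩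
      rintro B ⟨hB, hxB⟩
      rcases glue_mem_iff.1 hB with rfl | rfl | ⟨h, -, -⟩
      · rcases Finset.mem_insert.1 hxB with h' | h'
        · omega
        · exact absurd h' (no_N_mem hQ hC).2
      · rfl
      · exact absurd hxB (no_N_mem hQ h).2
    · have hx' : x ∈ BGround n := mem_BGround_of_ne hx hx1 hx2
      obtain ⟨B, ⟨hBQ, hxB⟩, huniq⟩ := hQ.1.2.2 x hx'
      by_cases hBC : B = C
      · refine ⟨insert N C, ⟨glue_mem_iff.2 (Or.inl rfl),
          Finset.mem_insert_of_mem (hBC ▸ hxB)⟩, ?_⟩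
        rintro B' ⟨hB', hxB'⟩
        rcases glue_mem_iff.1 hB' with rfl | rfl | ⟨h, hne1, hne2⟩
        · rfl
        · rcases Finset.mem_insert.1 hxB' with h' | h'
          · exact absurd h' hx2
          · rw [mem_negBlock] at h'
            have hxC : x ∈ C := hBC ▸ hxB
            have : negBlock C = C := by
              apply blocks_disj hQ (hQ.2.1 C hC) hC _ hxC
              rw [mem_negBlock]; exact h'
            exact absurd this (hQ.2.2 C hC)
        · exact absurd ((huniq B' ⟨h, hxB'⟩).trans hBC) hne1
      by_cases hBD : B = negBlock C
      · refine ⟨insert (-N) (negBlock C),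
          ⟨glue_mem_iff.2 (Or.inr (Or.inl rfl)), Finset.mem_insert_of_mem (hBD ▸ hxB)⟩, ?_⟩
        rintro B' ⟨hB', hxB'⟩
        rcases glue_mem_iff.1 hB' with rfl | rfl | ⟨h, hne1, hne2⟩
        · rcases Finset.mem_insert.1 hxB' with h' | h'
          · exact absurd h' hx1
          · have hxD : x ∈ negBlock C := hBD ▸ hxB
            have : C = negBlock C := by
              apply blocks_disj hQ hC (hQ.2.1 C hC) h'
              exact hxD
            exact absurd this.symm (hQ.2.2 C hC)
        · rfl
        · exact absurd ((huniq B' ⟨h, hxB'⟩).trans hBD) hne2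
      · refine ⟨B, ⟨glue_mem_iff.2 (Or.inr (Or.inr ⟨hBQ, hBC, hBD⟩)), hxB⟩, ?_⟩
        rintro B' ⟨hB', hxB'⟩
        rcases glue_mem_iff.1 hB' with rfl | rfl | ⟨h, hne1, hne2⟩
        · rcases Finset.mem_insert.1 hxB' with h' | h'
          · exact absurd h' hx1
          · exact absurd (huniq C ⟨hC, h'⟩).symm hBC
        · rcases Finset.mem_insert.1 hxB' with h' | h'
          · exact absurd h' hx2
          · exact absurd (huniq _ ⟨hD, h'⟩).symm hBD
        · exact huniq B' ⟨h, hxB'⟩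
  · intro B hB
    rcases glue_mem_iff.1 hB with rfl | rfl | ⟨h, hne1, hne2⟩
    · rw [negBlock_insert]
      exact glue_mem_iff.2 (Or.inr (Or.inl rfl))
    · rw [negBlock_insert, neg_neg, negBlock_negBlock]
      exact glue_mem_iff.2 (Or.inl rfl)
    · refine glue_mem_iff.2 (Or.inr (Or.inr ⟨hQ.2.1 B h, ?_, ?_⟩))
      · intro h'
        exact hne2 (by rw [← h', negBlock_negBlock])
      · intro h'
        exact hne1 (negBlock_inj h')
  · intro B hB
    rcases glue_mem_iff.1 hB with rfl | rfl | ⟨h, hne1, hne2⟩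
    · rw [negBlock_insert]
      exact hE1E2.symm
    · rw [negBlock_insert, neg_neg, negBlock_negBlock]
      exact hE1E2
    · exact hQ.2.2 B h

lemma glue_card (hQ : IsBPartNZ n Q) (hC : C ∈ Q) : (glue n Q C).card = Q.card := by
  set N : ℤ := (n:ℤ)+1 with hNdef
  have hD : negBlock C ∈ Q := hQ.2.1 C hC
  have hDC : negBlock C ≠ C := hQ.2.2 C hC
  have hE1E2 : insert N C ≠ insert (-N) (negBlock C) := by
    intro h
    have : N ∈ insert (-N) (negBlock C) := h ▸ Finset.mem_insert_self N C
    rcases Finset.mem_insert.1 this with h' | h'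
    · omega
    · exact (no_N_mem hQ hD).1 h'
  have hE1R : insert N C ∉ (Q.erase C).erase (negBlock C) := by
    intro h
    have := Finset.mem_of_mem_erase (Finset.mem_of_mem_erase h)
    exact (no_N_mem hQ this).1 (Finset.mem_insert_self _ _)
  have hE2R : insert (-N) (negBlock C) ∉ (Q.erase C).erase (negBlock C) := by
    intro h
    have := Finset.mem_of_mem_erase (Finset.mem_of_mem_erase h)
    exact (no_N_mem hQ this).2 (Finset.mem_insert_self _ _)
  rw [glue, Finset.card_insert_of_notMem (by
      rw [Finset.mem_insert]; push_neg; exact ⟨hE1E2, hE1R⟩),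
    Finset.card_insert_of_notMem hE2R,
    Finset.card_erase_of_mem (Finset.mem_erase.2 ⟨hDC, hD⟩),
    Finset.card_erase_of_mem hC]
  have h2 : 2 ≤ Q.card := by
    have := Finset.one_lt_card.2 ⟨C, hC, negBlock C, hD, hDC.symm⟩
    omega
  omega

lemma glue_no_singleton (hQ : IsBPartNZ n Q) (hC : C ∈ Q) :
    ({(n:ℤ)+1} : Finset ℤ) ∉ glue n Q C := by
  set N : ℤ := (n:ℤ)+1 with hNdef
  intro h
  rcases glue_mem_iff.1 h with h' | h' | ⟨h', -, -⟩
  · obtain ⟨x, hx⟩ := hQ.1.1 C hC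
    have : x ∈ ({N} : Finset ℤ) := h' ▸ Finset.mem_insert_of_mem hx
    rw [Finset.mem_singleton] at this
    exact (no_N_mem hQ hC).1 (by rwa [this] at hx)
  · have : -N ∈ ({N} : Finset ℤ) := h' ▸ Finset.mem_insert_self _ _
    rw [Finset.mem_singleton] at this
    omega
  · exact (no_N_mem hQ h').1 (Finset.mem_singleton_self N)

end Up

section Inverses

variable {n : ℕ}

lemma glue_strip {P : Finset (Finset ℤ)} (hP : IsBPartNZ (n+1) P)
    (h1 : ({(n:ℤ)+1} : Finset ℤ) ∉ P) :
    glue n (P.image (stripB n)) (stripB n (theBlock P ((n:ℤ)+1))) = P := by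
  set N : ℤ := (n:ℤ)+1 with hNdef
  obtain ⟨B0, ⟨hB0P, hNB0⟩, -⟩ := hP.1.2.2 N N_mem_BGround
  rw [theBlock_eq hP hB0P hNB0]
  have hnegN_B0 : -N ∉ B0 := neg_not_mem hP hB0P hNB0
  have hnB0 : negBlock B0 ∈ P := hP.2.1 B0 hB0P
  have hNnB0 : N ∉ negBlock B0 := by rw [mem_negBlock]; simpa using hnegN_B0
  have hnegNnB0 : -N ∈ negBlock B0 := by rw [mem_negBlock, neg_neg]; exact hNB0
  have hstrip0 : stripB n B0 = B0.erase N := by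
    rw [stripB, Finset.erase_eq_of_notMem]
    intro h
    exact hnegN_B0 (Finset.mem_of_mem_erase h)
  have hE1 : insert N (stripB n B0) = B0 := by
    rw [hstrip0, Finset.insert_erase hNB0]
  have hE2 : insert (-N) (negBlock (stripB n B0)) = negBlock B0 := by
    rw [negBlock_stripB, stripB, Finset.erase_eq_of_notMem hNnB0,
      Finset.insert_erase hnegNnB0]
  have hE2' : insert (-N) (stripB n (negBlock B0)) = negBlock B0 := by
    rw [← negBlock_stripB]; exact hE2
  ext B
  rw [glue_mem_iff, hE1]
  constructor
  · rintro (rfl | h | ⟨h, hne1, hne2⟩)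
    · exact hB0P
    · rw [negBlock_stripB] at h
      rw [h, ← negBlock_stripB, hE2]
      exact hnB0
    · rw [Finset.mem_image] at h
      obtain ⟨B', hB', rfl⟩ := h
      have hne1' : B' ≠ B0 := fun h => hne1 (by rw [h])
      have hne2' : B' ≠ negBlock B0 := by
        rintro rfl
        exact hne2 (negBlock_stripB n B0).symm
      have hN1 : N ∉ B' := fun h => hne1' (blocks_disj hP hB' hB0P h hNB0)
      have hN2 : -N ∉ B' := fun h => hne2' (blocks_disj hP hB' hnB0 h hnegNnB0)
      rwa [stripB_eq_self hN1 hN2]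
  · intro hB
    by_cases hc1 : N ∈ B
    · left; exact (blocks_disj hP hB hB0P hc1 hNB0)
    by_cases hc2 : -N ∈ B
    · right; left
      rw [negBlock_stripB, hE2']
      exact blocks_disj hP hB hnB0 hc2 hnegNnB0
    · right; right
      refine ⟨?_, ?_, ?_⟩
      · rw [← stripB_eq_self hc1 hc2]
        exact Finset.mem_image_of_mem _ hB
      · intro h
        rw [← stripB_eq_self hc1 hc2] at h
        exact hc1 ((stripB_injOn hP h1 hB hB0P h) ▸ hNB0)
      · intro h
        rw [← stripB_eq_self hc1 hc2, negBlock_stripB] at h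
        exact hc2 ((stripB_injOn hP h1 hB hnB0 h) ▸ hnegNnB0)

lemma strip_glue_block {Q : Finset (Finset ℤ)} {C : Finset ℤ}
    (hQ : IsBPartNZ n Q) (hC : C ∈ Q) :
    stripB n (theBlock (glue n Q C) ((n:ℤ)+1)) = C := by
  set N : ℤ := (n:ℤ)+1 with hNdef
  have hP := glue_isBPart hQ hC
  have hE1 : insert N C ∈ glue n Q C := glue_mem_iff.2 (Or.inl rfl)
  rw [theBlock_eq hP hE1 (Finset.mem_insert_self _ _)]
  have hNC : N ∉ C := (no_N_mem hQ hC).1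
  have hnNC : -N ∉ C := (no_N_mem hQ hC).2
  rw [stripB, Finset.erase_insert hNC, Finset.erase_eq_of_notMem hnNC]

lemma strip_glue_image {Q : Finset (Finset ℤ)} {C : Finset ℤ}
    (hQ : IsBPartNZ n Q) (hC : C ∈ Q) :
    (glue n Q C).image (stripB n) = Q := by
  set N : ℤ := (n:ℤ)+1 with hNdef
  have hD : negBlock C ∈ Q := hQ.2.1 C hC
  have hDC : negBlock C ≠ C := hQ.2.2 C hC
  have hNC : N ∉ C := (no_N_mem hQ hC).1
  have hnNC : -N ∉ C := (no_N_mem hQ hC).2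
  have hND : N ∉ negBlock C := (no_N_mem hQ hD).1
  have hnND : -N ∉ negBlock C := (no_N_mem hQ hD).2
  have hs1 : stripB n (insert N C) = C := by
    rw [stripB, Finset.erase_insert hNC, Finset.erase_eq_of_notMem hnNC]
  have hs2 : stripB n (insert (-N) (negBlock C)) = negBlock C := by
    have he : (insert (-N) (negBlock C)).erase N = insert (-N) (negBlock C) :=
      Finset.erase_eq_of_notMem (by
        rw [Finset.mem_insert]; push_neg
        exact ⟨by omega, hND⟩)
    rw [stripB, he, Finset.erase_insert hnND]
  rw [glue, Finset.image_insert, Finset.image_insert, hs1, hs2]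
  have hR : ((Q.erase C).erase (negBlock C)).image (stripB n)
      = (Q.erase C).erase (negBlock C) := by
    rw [show ((Q.erase C).erase (negBlock C)).image (stripB n)
        = ((Q.erase C).erase (negBlock C)).image id from
      Finset.image_congr (fun B hB => ?_), Finset.image_id]
    have hBQ : B ∈ Q := Finset.mem_of_mem_erase (Finset.mem_of_mem_erase hB)
    exact stripB_eq_self (no_N_mem hQ hBQ).1 (no_N_mem hQ hBQ).2
  rw [hR, Finset.insert_erase (Finset.mem_erase.2 ⟨hDC, hD⟩), Finset.insert_erase hC]

end Inverses

set_option maxHeartbeats 1000000 in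
lemma card_filter_not_singleton (n j : ℕ) :
    ((BP (n+1) (2*j+2)).filter (fun P => ({((n:ℤ)+1)} : Finset ℤ) ∉ P)).card
      = (2*j+2) * (BP n (2*j+2)).card := by
  have h1 : ((BP (n+1) (2*j+2)).filter (fun P => ({((n:ℤ)+1)} : Finset ℤ) ∉ P)).card
      = ((BP n (2*j+2)).sigma (fun Q => Q)).card := by
    apply card_bij'
      (fun P _ => (⟨P.image (stripB n), stripB n (theBlock P ((n:ℤ)+1))⟩ :
        (_ : Finset (Finset ℤ)) × Finset ℤ))
      (fun a _ => glue n a.1 a.2)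
    · -- forward lands in sigma
      intro P hP
      rw [mem_filter, mem_BP] at hP
      obtain ⟨⟨hB, hcard⟩, hsing⟩ := hP
      rw [Finset.mem_sigma, mem_BP]
      obtain ⟨B0, ⟨hB0P, hNB0⟩, -⟩ := hB.1.2.2 ((n:ℤ)+1) N_mem_BGround
      refine ⟨⟨down_isBPart hB hsing, by rw [down_card hB hsing, hcard]⟩, ?_⟩
      rw [theBlock_eq hB hB0P hNB0]
      exact Finset.mem_image_of_mem _ hB0P
    · -- backward lands in filter
      rintro ⟨Q, C⟩ ha
      rw [Finset.mem_sigma, mem_BP] at ha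
      obtain ⟨⟨hQ, hQcard⟩, hC⟩ := ha
      rw [mem_filter, mem_BP]
      exact ⟨⟨glue_isBPart hQ hC, by rw [glue_card hQ hC, hQcard]⟩, glue_no_singleton hQ hC⟩
    · -- left inverse
      intro P hP
      rw [mem_filter, mem_BP] at hP
      exact glue_strip hP.1.1 hP.2
    · -- right inverse
      rintro ⟨Q, C⟩ ha
      rw [Finset.mem_sigma, mem_BP] at ha
      obtain ⟨⟨hQ, hQcard⟩, hC⟩ := ha
      have e1 := strip_glue_image hQ hC
      have e2 := strip_glue_block hQ hC
      simp only at e1 e2 ⊢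
      exact Sigma.ext e1 (heq_of_eq e2)
  rw [h1, card_sigma,
    Finset.sum_congr rfl (fun Q hQ => (mem_BP.1 hQ).2),
    Finset.sum_const, smul_eq_mul, mul_comm]

lemma BP_rec (n j : ℕ) :
    (BP (n+1) (2*j+2)).card = (BP n (2*j)).card + (2*j+2) * (BP n (2*j+2)).card := by
  rw [← card_filter_singleton n j, ← card_filter_not_singleton n j]
  exact (card_filter_add_card_filter_not
    (s := BP (n+1) (2*j+2)) (fun P => ({((n:ℤ)+1)} : Finset ℤ) ∈ P)).symm

lemma BGround_zero : BGround 0 = ∅ := by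
  ext x; simp [BGround, Finset.mem_Icc]

lemma BP_zero_zero : BP 0 0 = {∅} := by
  ext P
  rw [mem_BP, Finset.mem_singleton]
  constructor
  · rintro ⟨hB, hcard⟩
    exact Finset.card_eq_zero.1 hcard
  · rintro rfl
    refine ⟨⟨⟨fun B hB => by simp at hB, fun B hB => by simp at hB, fun x hx => by
      rw [BGround_zero] at hx; simp at hx⟩, fun B hB => by simp at hB,
      fun B hB => by simp at hB⟩, rfl⟩

lemma BP_zero_succ (m : ℕ) : BP 0 (m+1) = ∅ := by
  rw [Finset.eq_empty_iff_forall_notMem]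
  intro P hP
  rw [mem_BP] at hP
  obtain ⟨hB, hcard⟩ := hP
  have : P = ∅ := by
    rw [Finset.eq_empty_iff_forall_notMem]
    intro B hBP
    obtain ⟨x, hx⟩ := hB.1.1 B hBP
    have := hB.1.2.1 B hBP hx
    rw [BGround_zero] at this
    simp at this
  rw [this] at hcard
  simp at hcard

lemma BP_succ_zero (n : ℕ) : BP (n+1) 0 = ∅ := by
  rw [Finset.eq_empty_iff_forall_notMem]
  intro P hP
  rw [mem_BP] at hP
  obtain ⟨hB, hcard⟩ := hP
  have h1 : (1 : ℤ) ∈ BGround (n+1) := by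
    rw [mem_BGround]
    refine ⟨one_ne_zero, ?_, ?_⟩ <;> push_cast <;> omega
  obtain ⟨B, ⟨hBP, -⟩, -⟩ := hB.1.2.2 1 h1
  rw [Finset.card_eq_zero.1 hcard] at hBP
  simp at hBP

lemma BP_card_le {n m : ℕ} {P : Finset (Finset ℤ)} (hP : P ∈ BP n m) : m ≤ 2*n := by
  rw [mem_BP] at hP
  obtain ⟨hB, hcard⟩ := hP
  rw [← hcard, ← card_BGround n]
  apply Finset.card_le_card_of_injOn
    (fun B => if h : B.Nonempty then B.min' h else 0)
  · intro B hBP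
    simp only [hB.1.1 B hBP, dif_pos]
    exact hB.1.2.1 B hBP (Finset.min'_mem B (hB.1.1 B hBP))
  · intro B hBP C hCP h
    simp only [Finset.mem_coe] at hBP hCP
    have hBne := hB.1.1 B hBP
    have hCne := hB.1.1 C hCP
    simp only [hBne, hCne, dif_pos] at h
    exact blocks_disj hB hBP hCP (Finset.min'_mem B hBne) (h ▸ Finset.min'_mem C hCne)

lemma BP_large (n m : ℕ) (h : 2*n < m) : BP n m = ∅ := by
  rw [Finset.eq_empty_iff_forall_notMem]
  intro P hP
  exact absurd (BP_card_le hP) (by omega)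

lemma stirling2_eq_zero : ∀ {n k : ℕ}, n < k → stirling2 n k = 0 := by
  intro n
  induction n with
  | zero => intro k hk; obtain ⟨k', rfl⟩ : ∃ k', k = k' + 1 := ⟨k - 1, by omega⟩; rfl
  | succ n ih =>
    intro k hk
    obtain ⟨k', rfl⟩ : ∃ k', k = k' + 1 := ⟨k - 1, by omega⟩
    show (k' + 1) * stirling2 n (k' + 1) + stirling2 n k' = 0
    rw [ih (by omega), ih (by omega)]
    ring

lemma BP_card_eq (n : ℕ) : ∀ j : ℕ, (BP n (2*j)).card = 2^(n-j) * stirling2 n j := by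
  induction n with
  | zero =>
    intro j
    match j with
    | 0 => simp [BP_zero_zero, stirling2]
    | j+1 =>
      rw [show 2*(j+1) = (2*j+1)+1 by ring, BP_zero_succ]
      simp [stirling2]
  | succ n ih =>
    intro j
    match j with
    | 0 =>
      rw [Nat.mul_zero, BP_succ_zero]
      simp [stirling2]
    | j+1 =>
      rw [show 2*(j+1) = 2*j+2 by ring, BP_rec n j, ih j]
      have hs : stirling2 (n+1) (j+1) = (j+1) * stirling2 n (j+1) + stirling2 n j := rfl
      rcases lt_or_ge j n with h | h
      · have h2 : (BP n (2*j+2)).card = 2^(n-(j+1)) * stirling2 n (j+1) := by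
          rw [show 2*j+2 = 2*(j+1) by ring]; exact ih (j+1)
        rw [h2, hs]
        obtain ⟨k, hk⟩ : ∃ k, n - j = k + 1 := ⟨n - j - 1, by omega⟩
        have hk2 : n - (j+1) = k := by omega
        have hk3 : n + 1 - (j+1) = k + 1 := by omega
        rw [hk, hk2, hk3]
        ring
      · rcases eq_or_lt_of_le h with rfl | h'
        · have h2 : (BP n (2*n+2)).card = 0 := by
            rw [BP_large n (2*n+2) (by omega)]; rfl
          rw [h2, hs, stirling2_eq_zero (show n < n+1 by omega)]
          simp
        · rw [BP_large n (2*j+2) (by omega), hs,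
            stirling2_eq_zero (show n < j from h'),
            stirling2_eq_zero (show n < j+1 by omega)]
          simp

theorem typeB_card_blocks (n j : ℕ) (hj : j ≤ n) :
    Nat.card {P : Finset (Finset ℤ) // IsBPartNZ n P ∧ P.card = 2 * j}
      = 2 ^ (n - j) * stirling2 n j := by
  have e : {P : Finset (Finset ℤ) // IsBPartNZ n P ∧ P.card = 2 * j}
      ≃ {P : Finset (Finset ℤ) // P ∈ BP n (2*j)} :=
    Equiv.subtypeEquivRight (fun P => mem_BP.symm)
  rw [Nat.card_congr e, Nat.card_eq_finsetCard, BP_card_eq n j]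
end

section
/- For every type B_n partition π without zero-block with n ≥ 1, the number of adjacency pairs a_π is at most n, and a_π = n if and only if all of 1,2,...,n lie in one block of π. -/
/-- For `n ≥ 1`, a type `B_n` partition without zero-block has at most `n` adjacency
pairs, with equality iff `1, 2, …, n` all lie in one block. -/
theorem typeB_apairs_le (n : ℕ) (hn : 1 ≤ n) (P : Finset (Finset ℤ)) (hP : IsBPartNZ n P) :
    apairs n P ≤ n ∧
      (apairs n P = n ↔ ∃ B ∈ P, ∀ i ∈ Finset.Icc (1 : ℤ) n, i ∈ B) := by
  obtain ⟨⟨h1, h2, h3⟩, _, _⟩ := hP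
  have hcard : (Finset.Icc (1 : ℤ) n).card = n := by
    rw [Int.card_Icc]; simp
  have hground : ∀ i ∈ Finset.Icc (1 : ℤ) n, i ∈ BGround n := by
    intro i hi
    simp only [Finset.mem_Icc] at hi
    simp only [BGround, Finset.mem_erase, Finset.mem_Icc]
    exact ⟨by omega, by omega, hi.2⟩
  have huniq : ∀ i ∈ Finset.Icc (1 : ℤ) n, ∀ B ∈ P, ∀ B' ∈ P, i ∈ B → i ∈ B' → B = B' := by
    intro i hi B hB B' hB' hiB hiB'
    obtain ⟨C, _, hC2⟩ := h3 i (hground i hi)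
    rw [hC2 B ⟨hB, hiB⟩, hC2 B' ⟨hB', hiB'⟩]
  have hle : apairs n P ≤ n := le_trans (Finset.card_filter_le _ _) (le_of_eq hcard)
  have h1mem : (1 : ℤ) ∈ Finset.Icc (1 : ℤ) n := by
    simp only [Finset.mem_Icc]; omega
  refine ⟨hle, ?_, ?_⟩
  · intro heq
    have hfilt : (Finset.Icc (1 : ℤ) n).filter
        (fun j => ∃ B ∈ P, j ∈ B ∧ bnext n j ∈ B) = Finset.Icc (1 : ℤ) n :=
      Finset.eq_of_subset_of_card_le (Finset.filter_subset _ _) (by rw [hcard]; exact heq.ge)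
    have hall : ∀ j ∈ Finset.Icc (1 : ℤ) n, ∃ B ∈ P, j ∈ B ∧ bnext n j ∈ B := by
      intro j hj
      have hj' : j ∈ (Finset.Icc (1 : ℤ) n).filter
          (fun j => ∃ B ∈ P, j ∈ B ∧ bnext n j ∈ B) := by rw [hfilt]; exact hj
      exact (Finset.mem_filter.mp hj').2
    obtain ⟨B₁, hB₁, h1B₁⟩ := hall 1 h1mem
    refine ⟨B₁, hB₁, ?_⟩
    have key : ∀ k : ℕ, (1 + k : ℤ) ≤ n → (1 + k : ℤ) ∈ B₁ := by
      intro k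
      induction k with
      | zero => intro _; simpa using h1B₁.1
      | succ k ih =>
        intro hin
        push_cast at hin ⊢
        have hik : (1 + k : ℤ) ≤ n := by omega
        have hiIcc : (1 + k : ℤ) ∈ Finset.Icc (1 : ℤ) n := by
          simp only [Finset.mem_Icc]; omega
        obtain ⟨B, hB, hiB, hnB⟩ := hall (1 + k) hiIcc
        have hne : (1 + k : ℤ) ≠ (n : ℤ) := by omega
        rw [bnext, if_neg hne] at hnB
        have hBB : B = B₁ := huniq (1 + k) hiIcc B hB B₁ hB₁ hiB (ih hik)
        rw [← hBB]
        convert hnB using 1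
        ring
    intro i hi
    simp only [Finset.mem_Icc] at hi
    have hk : ∃ k : ℕ, i = 1 + (k : ℤ) := ⟨(i - 1).toNat, by omega⟩
    obtain ⟨k, rfl⟩ := hk
    exact key k hi.2
  · rintro ⟨B, hB, hall⟩
    have hfilt : (Finset.Icc (1 : ℤ) n).filter
        (fun j => ∃ B ∈ P, j ∈ B ∧ bnext n j ∈ B) = Finset.Icc (1 : ℤ) n := by
      apply Finset.filter_true_of_mem
      intro j hj
      refine ⟨B, hB, hall j hj, ?_⟩
      rw [bnext]
      split
      · exact hall 1 h1mem
      · apply hall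
        simp only [Finset.mem_Icc] at hj ⊢
        rename_i hne
        omega
    show ((Finset.Icc (1 : ℤ) n).filter _).card = n
    rw [hfilt, hcard]
end
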